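/- If topological spaces X and Y are connected by projections and twists, then the Loday functors 𝓛_{C(X)} and 𝓛_{C(Y)} are isomorphic as functors from the category Ω of finite nonempty sets and surjections to ℂ-vector spaces. Explicitly, the maps Φ_r = T̄_{r+1}^{(r)} : C(X)^{⊗r} → C(Y)^{⊗r} and Ψ_r = T_{r+1}^{(r)} : C(Y)^{⊗r} → C(X)^{⊗r} form mutually inverse natural transformations. -/

import Mathlib

/-! Since `A ↦ A^{(r)}` is linear and contravariant, the relations between the `pᵢ, qᵢ, hᵢ, h̄ᵢ`
become relations between operators `Pᵢ, Qᵢ, Hᵢ, H̄ᵢ` on tensor powers. In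
`Ψ_r Φ_r = Σ_{i,j} Hᵢ Z̄_{i-1} H̄ⱼ Z_{j-1} = Σ_{i,j} Pᵢ Pⱼ Z_{i-1} Z_{j-1}` the terms with `i ≠ j`
vanish and the diagonal telescopes to `1 - Z_{r+1}^{(r)}`. Because the `pᵢ` commute and move
disjoint sets, `f ∘ p_S = f + Σ_{i ∈ S} (f ∘ pᵢ - f)` for the composite `p_S` of any set of them,
so `Zₙ^{(r)} (f₁ ⊗ ⋯ ⊗ f_r)` is an `n`-th finite difference of a multilinear map of `r < n`
arguments, which is zero. Naturality holds for every ensemble, precomposition being an algebra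
map, and `Tₙ^{(s)} = T_{s+1}^{(s)}` for `n > s` because `Z_{n-1}^{(s)} = 0`. -/

open scoped TensorProduct Classical

noncomputable section

/-- The ℂ-linear span `⟨Y^X⟩` of the set of continuous maps `X → Y` (ensembles). -/
abbrev Ens (X Y : Type) [TopologicalSpace X] [TopologicalSpace Y] : Type :=
  C(X, Y) →₀ ℂ

variable {X Y W : Type} [TopologicalSpace X] [TopologicalSpace Y] [TopologicalSpace W]

/-- The bilinear extension of composition of maps to ensembles. -/
def Ens.comp (B : Ens Y W) (A : Ens X Y) : Ens X W :=
  B.sum fun b v => A.sum fun a u => Finsupp.single (b.comp a) (v * u)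

/-- The identity map `1` as an ensemble. -/
def Ens.one (X : Type) [TopologicalSpace X] : Ens X X :=
  Finsupp.single (ContinuousMap.id X) 1

/-- A single continuous map viewed as an ensemble. -/
def Ens.of (a : C(X, Y)) : Ens X Y := Finsupp.single a 1

/-- The multilinear map underlying `A^{(r)}`, sending `(f₁,…,f_r)` to
`Σᵢ uᵢ (f₁∘aᵢ)⊗⋯⊗(f_r∘aᵢ)`. -/
def Ens.applM (A : Ens X Y) (r : ℕ) :
    MultilinearMap ℂ (fun _ : Fin r => C(Y, ℂ)) (⨂[ℂ] _ : Fin r, C(X, ℂ)) :=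
  A.sum fun a u =>
    u • (PiTensorProduct.tprod ℂ (s := fun _ : Fin r => C(X, ℂ))).compLinearMap
      (fun _ => (ContinuousMap.compRightAlgHom ℂ ℂ a).toLinearMap)

/-- The induced linear map `A^{(r)} : C(Y)^{⊗r} → C(X)^{⊗r}`. -/
def Ens.applL (A : Ens X Y) (r : ℕ) :
    (⨂[ℂ] _ : Fin r, C(Y, ℂ)) →ₗ[ℂ] ⨂[ℂ] _ : Fin r, C(X, ℂ) :=
  PiTensorProduct.lift (A.applM r)

/-- The restriction `A|_T` of an ensemble to a subset `T ⊆ X`, as an element of the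
free ℂ-vector space on the set of maps `T → Y`. -/
def Ens.restr (A : Ens X Y) (T : Set X) : (T → Y) →₀ ℂ :=
  A.sum fun a u => Finsupp.single (fun t : T => a t) u

/-- The ensemble `Zₙ = Π_{i=1}^{n}(1 − pᵢ)` built from a sequence of self-maps. -/
def Ens.Z (p : ℕ → C(X, X)) (n : ℕ) : Ens X X :=
  ((List.range n).map (fun i => Ens.one X - Ens.of (p (i + 1)))).foldr Ens.comp (Ens.one X)

/-- The ensemble `Tₙ = Σ_{i=1}^{n} Z̄_{i−1} hᵢ`. -/
def Ens.T (q : ℕ → C(Y, Y)) (h : ℕ → C(X, Y)) (n : ℕ) : Ens X Y :=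
  ∑ i ∈ Finset.range n, Ens.comp (Ens.Z q i) (Ens.of (h (i + 1)))

/-- A set of projections and twists connecting topological spaces `X` and `Y`. -/
structure ProjTwist (X Y : Type) [TopologicalSpace X] [TopologicalSpace Y] where
  p : ℕ → C(X, X)
  q : ℕ → C(Y, Y)
  h : ℕ → C(X, Y)
  hb : ℕ → C(Y, X)
  p_idem : ∀ n, (p n).comp (p n) = p n
  p_comm : ∀ i j, (p i).comp (p j) = (p j).comp (p i)
  q_idem : ∀ n, (q n).comp (q n) = q n
  q_comm : ∀ i j, (q i).comp (q j) = (q j).comp (q i)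
  p_mov : ∀ i j, i ≠ j → Disjoint {x | p i x ≠ x} {x | p j x ≠ x}
  q_mov : ∀ i j, i ≠ j → Disjoint {y | q i y ≠ y} {y | q j y ≠ y}
  qh : ∀ i j, (q j).comp (h i) = (h i).comp (p j)
  phb : ∀ i j, (p j).comp (hb i) = (hb i).comp (q j)
  hbh : ∀ i j, (hb j).comp (h i) = (p j).comp (p i)
  hhb : ∀ i j, (h i).comp (hb j) = (q i).comp (q j)


/-- The multilinear map underlying the Loday structure map `σ*` for a map
`σ : ⟨r⟩ → ⟨s⟩`: it sends `(f₁,…,f_r)` to `g₁⊗⋯⊗g_s` with `gⱼ = Π_{i∈σ⁻¹(j)} fᵢ`. -/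
def lodayMl (B : Type) [CommRing B] [Algebra ℂ B] {r s : ℕ} (σ : Fin r → Fin s) :
    MultilinearMap ℂ (fun _ : Fin r => B) (⨂[ℂ] _ : Fin s, B) where
  toFun f := PiTensorProduct.tprod ℂ
    (fun j => ∏ i ∈ Finset.univ.filter (fun i => σ i = j), f i)
  map_update_add' := by
    intro _ f i x y
    have key : ∀ z : B,
        (fun j => ∏ i' ∈ Finset.univ.filter (fun i' => σ i' = j), Function.update f i z i') =
          Function.update (fun j => ∏ i' ∈ Finset.univ.filter (fun i' => σ i' = j), f i')
            (σ i) (z * ∏ i' ∈ (Finset.univ.filter (fun i' => σ i' = σ i)).erase i, f i') := by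
      intro z
      funext j
      by_cases hj : j = σ i
      · subst hj
        rw [Function.update_self]
        have hi : i ∈ Finset.univ.filter (fun i' => σ i' = σ i) := by simp
        rw [← Finset.mul_prod_erase _ _ hi, Function.update_self]
        congr 1
        exact Finset.prod_congr rfl fun i' hi' =>
          Function.update_of_ne (Finset.ne_of_mem_erase hi') _ _
      · rw [Function.update_of_ne hj]
        exact Finset.prod_congr rfl fun i' hi' => by
          have : i' ≠ i := fun e => hj (by simpa [e] using ((Finset.mem_filter.mp hi').2).symm)
          exact Function.update_of_ne this _ _
    simp only [key, add_mul]
    exact (PiTensorProduct.tprod ℂ).map_update_add _ _ _ _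
  map_update_smul' := by
    intro _ f i c x
    have key : ∀ z : B,
        (fun j => ∏ i' ∈ Finset.univ.filter (fun i' => σ i' = j), Function.update f i z i') =
          Function.update (fun j => ∏ i' ∈ Finset.univ.filter (fun i' => σ i' = j), f i')
            (σ i) (z * ∏ i' ∈ (Finset.univ.filter (fun i' => σ i' = σ i)).erase i, f i') := by
      intro z
      funext j
      by_cases hj : j = σ i
      · subst hj
        rw [Function.update_self]
        have hi : i ∈ Finset.univ.filter (fun i' => σ i' = σ i) := by simp
        rw [← Finset.mul_prod_erase _ _ hi, Function.update_self]
        congr 1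
        exact Finset.prod_congr rfl fun i' hi' =>
          Function.update_of_ne (Finset.ne_of_mem_erase hi') _ _
      · rw [Function.update_of_ne hj]
        exact Finset.prod_congr rfl fun i' hi' => by
          have : i' ≠ i := fun e => hj (by simpa [e] using ((Finset.mem_filter.mp hi').2).symm)
          exact Function.update_of_ne this _ _
    simp only [key, smul_mul_assoc]
    exact (PiTensorProduct.tprod ℂ).map_update_smul _ _ _ _

/-- The Loday structure map `σ* : B^{⊗r} → B^{⊗s}`. -/
def lodayL (B : Type) [CommRing B] [Algebra ℂ B] {r s : ℕ} (σ : Fin r → Fin s) :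
    (⨂[ℂ] _ : Fin r, B) →ₗ[ℂ] ⨂[ℂ] _ : Fin s, B :=
  PiTensorProduct.lift (lodayMl B σ)

section ComplProd

variable {R : Type*} [Ring R]

def complProd (P : ℕ → R) : ℕ → R
  | 0 => 1
  | n + 1 => (1 - P (n + 1)) * complProd P n

@[simp] theorem complProd_zero (P : ℕ → R) : complProd P 0 = 1 := rfl

theorem complProd_succ (P : ℕ → R) (n : ℕ) :
    complProd P (n + 1) = (1 - P (n + 1)) * complProd P n := rfl

variable {P : ℕ → R}

theorem commute_complProd {a : R} (ha : ∀ i, Commute a (P i)) (n : ℕ) :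
    Commute a (complProd P n) := by
  induction n with
  | zero => exact Commute.one_right a
  | succ n ih => exact ((Commute.one_right a).sub_right (ha _)).mul_right ih

theorem sum_mul_complProd (n : ℕ) :
    ∑ i ∈ Finset.range n, P (i + 1) * complProd P i = 1 - complProd P n := by
  induction n with
  | zero => simp
  | succ n ih => rw [Finset.sum_range_succ, ih, complProd_succ, sub_mul, one_mul]; abel

theorem mul_complProd_eq_zero (hcomm : ∀ i j, Commute (P i) (P j))
    (hidem : ∀ i, IsIdempotentElem (P i)) {i n : ℕ} (hi : i < n) :
    P (i + 1) * complProd P n = 0 := by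
  induction n with
  | zero => omega
  | succ n ih =>
    rw [complProd_succ, ← mul_assoc]
    rcases (Nat.lt_succ_iff_lt_or_eq.mp hi) with hlt | rfl
    · rw [((Commute.one_right _).sub_right (hcomm _ _)).eq, mul_assoc, ih hlt, mul_zero]
    · rw [mul_sub, mul_one, (hidem _).eq, sub_self, zero_mul]

theorem isIdempotentElem_complProd (hcomm : ∀ i j, Commute (P i) (P j))
    (hidem : ∀ i, IsIdempotentElem (P i)) (n : ℕ) : IsIdempotentElem (complProd P n) := by
  induction n with
  | zero => exact IsIdempotentElem.one
  | succ n ih =>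
    exact (hidem _).one_sub.mul_of_commute
      (commute_complProd (fun i => (Commute.one_left _).sub_left (hcomm (n + 1) i)) n) ih

theorem sum_sum_mul_mul_complProd (hcomm : ∀ i j, Commute (P i) (P j))
    (hidem : ∀ i, IsIdempotentElem (P i)) (n : ℕ) :
    ∑ i ∈ Finset.range n, ∑ j ∈ Finset.range n,
      P (i + 1) * P (j + 1) * (complProd P i * complProd P j) = 1 - complProd P n := by
  rw [← sum_mul_complProd n]
  refine Finset.sum_congr rfl fun i hi => ?_
  rw [Finset.sum_eq_single_of_mem i hi, (hidem _).eq,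
    (isIdempotentElem_complProd hcomm hidem i).eq]
  intro j _ hji
  rcases lt_or_gt_of_ne hji with hlt | hlt
  · rw [mul_assoc, ← mul_assoc (P (j + 1)), mul_complProd_eq_zero hcomm hidem hlt, zero_mul,
      mul_zero]
  · rw [(hcomm _ _).eq, mul_assoc, ← mul_assoc (P (i + 1)),
      (commute_complProd (hcomm (i + 1)) i).eq, mul_assoc, mul_complProd_eq_zero hcomm hidem hlt,
      mul_zero, mul_zero]

end ComplProd

section Intertwining

variable {R U V : Type*} [CommRing R] [AddCommGroup U] [Module R U] [AddCommGroup V] [Module R V]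

theorem complProd_comp_of_comp_eq {P : ℕ → Module.End R U} {Q : ℕ → Module.End R V}
    {G : U →ₗ[R] V} (hG : ∀ j, G ∘ₗ P j = Q j ∘ₗ G) (n : ℕ) :
    complProd Q n ∘ₗ G = G ∘ₗ complProd P n := by
  induction n with
  | zero => rfl
  | succ n ih =>
    rw [complProd_succ, complProd_succ, Module.End.mul_eq_comp, Module.End.mul_eq_comp,
      LinearMap.comp_assoc, ih, ← LinearMap.comp_assoc, ← LinearMap.comp_assoc]
    simp only [Module.End.one_eq_id, LinearMap.sub_comp, LinearMap.comp_sub, hG,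
      LinearMap.id_comp, LinearMap.comp_id]

theorem sum_comp_sum_eq_one_sub_complProd {P : ℕ → Module.End R U} {Q : ℕ → Module.End R V}
    {H : ℕ → V →ₗ[R] U} {H' : ℕ → U →ₗ[R] V} (hcomm : ∀ i j, Commute (P i) (P j))
    (hidem : ∀ i, IsIdempotentElem (P i)) (hH'P : ∀ i j, H' i ∘ₗ P j = Q j ∘ₗ H' i)
    (hHH' : ∀ i j, H i ∘ₗ H' j = P i * P j) (n : ℕ) :
    (∑ i ∈ Finset.range n, H (i + 1) ∘ₗ complProd Q i) ∘ₗ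
        (∑ j ∈ Finset.range n, H' (j + 1) ∘ₗ complProd P j) = 1 - complProd P n := by
  have hterm : ∀ i j, (H (i + 1) ∘ₗ complProd Q i) ∘ₗ (H' (j + 1) ∘ₗ complProd P j) =
      P (i + 1) * P (j + 1) * (complProd P i * complProd P j) := by
    intro i j
    rw [LinearMap.comp_assoc, ← LinearMap.comp_assoc _ _ (complProd Q i),
      complProd_comp_of_comp_eq (hH'P (j + 1)), LinearMap.comp_assoc,
      ← LinearMap.comp_assoc _ (H' (j + 1)) (H (i + 1)), hHH']
    rfl
  rw [← sum_sum_mul_mul_complProd hcomm hidem]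
  refine (map_sum (LinearMap.lcomp R U _) _ _).trans (Finset.sum_congr rfl fun i _ => ?_)
  refine (map_sum (LinearMap.llcomp R U V U _) _ _).trans (Finset.sum_congr rfl fun j _ => ?_)
  exact hterm i j

end Intertwining

open Finset in
theorem Finset.sum_powerset_filter_superset_neg_one_pow {R α : Type*} [Ring R] [DecidableEq α]
    {s t : Finset α} (hts : t ⊂ s) : ∑ u ∈ s.powerset with t ⊆ u, (-1 : R) ^ #u = 0 := by
  obtain ⟨a, has, hat⟩ := exists_of_ssubset hts
  rw [sum_filter, ← insert_erase has, sum_powerset_insert (notMem_erase a s), ← sum_add_distrib]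
  refine sum_eq_zero fun u hu => ?_
  have hau : a ∉ u := fun h => notMem_erase a s (mem_powerset.mp hu h)
  simp only [card_insert_of_notMem hau, subset_insert_iff_of_notMem hat, pow_succ]
  split_ifs <;> simp

open Finset in
theorem MultilinearMap.sum_powerset_neg_one_pow_smul_map_add_sum {R ι κ : Type*} [CommRing R]
    [Fintype ι] {M : ι → Type*} [∀ i, AddCommGroup (M i)] [∀ i, Module R (M i)]
    {N : Type*} [AddCommGroup N] [Module R N] (φ : MultilinearMap R M N) (x : ∀ i, M i)
    (v : κ → ∀ i, M i) {s : Finset κ} (hs : Fintype.card ι < #s) :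
    ∑ t ∈ s.powerset, (-1 : R) ^ #t • φ (x + ∑ k ∈ t, v k) = 0 := by
  classical
  -- Expanding multilinearly, each term uses at most `card ι` of the `v k`; its coefficient is an
  -- alternating sum over the supersets of those, hence zero.
  let w : ∀ i, Option κ → M i := fun i o => o.elim (x i) (fun k => v k i)
  let support : (ι → Option κ) → Finset κ := fun c => (univ.image c).eraseNone
  have hexpand : ∀ t : Finset κ, x + ∑ k ∈ t, v k = fun i => ∑ o ∈ insertNone t, w i o := by
    intro t; ext i; simp [sum_insertNone, w]
  have hmem : ∀ (t : Finset κ) (c : ι → Option κ),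
      c ∈ Fintype.piFinset (fun _ => insertNone t) ↔ support c ⊆ t := by
    intro t c
    simp only [support, Fintype.mem_piFinset, mem_insertNone, subset_iff, mem_eraseNone,
      mem_image, mem_univ, true_and, Option.mem_def, forall_exists_index]
    exact forall_comm
  simp_rw [hexpand, φ.map_sum_finset, smul_sum]
  rw [sum_comm' (t' := Fintype.piFinset fun _ => insertNone s)
    (s' := fun c => s.powerset.filter (support c ⊆ ·))]
  · refine sum_eq_zero fun c hc => ?_
    rw [← sum_smul, sum_powerset_filter_superset_neg_one_pow, zero_smul]
    refine ssubset_of_subset_of_ne ((hmem s c).mp hc) fun h => ?_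
    have hcard : #(support c) ≤ Fintype.card ι :=
      (card_eraseNone_le (univ.image c)).trans card_image_le
    rw [h] at hcard
    omega
  · intro t c
    rw [mem_filter, hmem, mem_powerset, hmem]
    exact ⟨fun h => ⟨h, h.2.trans h.1⟩, And.left⟩

-- Instance search does not find this on its own inside `AddCommGroup` of linear maps.
instance PiTensorProduct.addCommGroupContinuousMap (r : ℕ) :
    AddCommGroup (⨂[ℂ] _ : Fin r, C(X, ℂ)) :=
  inferInstance

namespace Ens

def applLinear (r : ℕ) :
    Ens X Y →ₗ[ℂ] (⨂[ℂ] _ : Fin r, C(Y, ℂ)) →ₗ[ℂ] ⨂[ℂ] _ : Fin r, C(X, ℂ) :=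
  PiTensorProduct.lift.toLinearMap ∘ₗ Finsupp.linearCombination ℂ fun a =>
    (PiTensorProduct.tprod ℂ).compLinearMap fun _ =>
      (ContinuousMap.compRightAlgHom ℂ ℂ a).toLinearMap

theorem applL_sub (A B : Ens X Y) (r : ℕ) : (A - B).applL r = A.applL r - B.applL r :=
  map_sub (applLinear r) A B

theorem applL_sum {ι : Type*} (s : Finset ι) (A : ι → Ens X Y) (r : ℕ) :
    (∑ i ∈ s, A i).applL r = ∑ i ∈ s, (A i).applL r :=
  map_sum (applLinear r) A s

theorem applL_tprod (A : Ens X Y) (r : ℕ) (f : Fin r → C(Y, ℂ)) :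
    A.applL r (PiTensorProduct.tprod ℂ f) =
      A.sum fun a u => u • PiTensorProduct.tprod ℂ fun i => (f i).comp a := by
  rw [applL, PiTensorProduct.lift.tprod, applM, Finsupp.sum, Finsupp.sum, sum_apply]
  rfl

theorem applL_of_tprod (a : C(X, Y)) (r : ℕ) (f : Fin r → C(Y, ℂ)) :
    (of a).applL r (PiTensorProduct.tprod ℂ f) =
      PiTensorProduct.tprod ℂ fun i => (f i).comp a := by
  rw [applL_tprod, of, Finsupp.sum_single_index (by simp), one_smul]

theorem applL_one (r : ℕ) : (Ens.one X).applL r = 1 :=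
  PiTensorProduct.ext <| MultilinearMap.ext fun f => applL_of_tprod _ r f

theorem applL_comp (B : Ens Y W) (A : Ens X Y) (r : ℕ) :
    (comp B A).applL r = A.applL r ∘ₗ B.applL r := by
  refine PiTensorProduct.ext <| MultilinearMap.ext fun f => ?_
  simp only [LinearMap.compMultilinearMap_apply, LinearMap.comp_apply, applL_tprod]
  rw [comp, Finsupp.sum_sum_index (by simp) (fun _ _ _ => add_smul _ _ _), map_finsuppSum]
  refine Finsupp.sum_congr fun b _ => ?_
  rw [Finsupp.sum_sum_index (by simp) (fun _ _ _ => add_smul _ _ _), map_smul, applL_tprod,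
    Finsupp.smul_sum]
  refine Finsupp.sum_congr fun a _ => ?_
  rw [Finsupp.sum_single_index (by simp), smul_smul]
  rfl

theorem comp_of_of (b : C(Y, W)) (a : C(X, Y)) : comp (of b) (of a) = of (b.comp a) := by
  rw [comp, of, of, Finsupp.sum_single_index (by simp), Finsupp.sum_single_index (by simp),
    mul_one, of]

theorem applL_of_comp (b : C(Y, W)) (a : C(X, Y)) (r : ℕ) :
    (of (b.comp a)).applL r = (of a).applL r ∘ₗ (of b).applL r := by
  rw [← comp_of_of, applL_comp]

end Ens

section DisjointlyMoving

variable {M : Type*} [TopologicalSpace M] [AddCommGroup M] [IsTopologicalAddGroup M]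

theorem ContinuousMap.comp_sub_self_comp_of_disjoint {a b : C(X, X)} (hab : a.comp b = b.comp a)
    (hdisj : Disjoint {x | a x ≠ x} {x | b x ≠ x}) (f : C(X, M)) :
    (f.comp a - f).comp b = f.comp a - f := by
  ext x
  by_cases hbx : b x = x
  · simp [hbx]
  have hax : a x = x := not_not.mp (Set.disjoint_right.mp hdisj hbx)
  have habx : a (b x) = b x := by simpa [hax] using ContinuousMap.congr_fun hab x
  simp [hax, habx]

theorem ContinuousMap.add_sum_comp_sub_self_comp {κ : Type*} [DecidableEq κ] (p : κ → C(X, X))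
    (f : C(X, M)) {t : Finset κ} {m : κ} (hm : m ∉ t)
    (hcomm : ∀ i ∈ t, (p i).comp (p m) = (p m).comp (p i))
    (hdisj : ∀ i ∈ t, Disjoint {x | p i x ≠ x} {x | p m x ≠ x}) :
    (f + ∑ i ∈ t, (f.comp (p i) - f)).comp (p m) = f + ∑ i ∈ insert m t, (f.comp (p i) - f) := by
  have hsum : (∑ i ∈ t, (f.comp (p i) - f)).comp (p m) = ∑ i ∈ t, (f.comp (p i) - f) :=
    (map_sum (compAddMonoidHom' (γ := M) (p m)) _ t).trans <| Finset.sum_congr rfl fun i hi =>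
      comp_sub_self_comp_of_disjoint (hcomm i hi) (hdisj i hi) f
  rw [add_comp, hsum, Finset.sum_insert hm]
  abel

end DisjointlyMoving

namespace Ens

theorem applL_foldr_comp (l : List (Ens X X)) (A : Ens X X) (r : ℕ) :
    (l.foldr comp A).applL r = A.applL r ∘ₗ (l.foldr comp (Ens.one X)).applL r := by
  induction l with
  | nil =>
    rw [List.foldr_nil, List.foldr_nil, applL_one, Module.End.one_eq_id, LinearMap.comp_id]
  | cons B l ih =>
    rw [List.foldr_cons, List.foldr_cons, applL_comp, applL_comp, ih, LinearMap.comp_assoc]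

theorem applL_Z (p : ℕ → C(X, X)) (r n : ℕ) :
    (Z p n).applL r = complProd (fun i => (of (p i)).applL r) n := by
  induction n with
  | zero => exact applL_one r
  | succ n ih =>
    rw [Z, List.range_succ, List.map_append, List.foldr_append, applL_foldr_comp, ← Z, ih,
      complProd_succ, List.map_singleton, List.foldr_cons, List.foldr_nil, applL_comp,
      applL_one, applL_sub, applL_one]
    rfl

theorem applL_T (q : ℕ → C(Y, Y)) (h : ℕ → C(X, Y)) (r n : ℕ) :
    (T q h n).applL r =
      ∑ i ∈ Finset.range n,
        (of (h (i + 1))).applL r ∘ₗ complProd (fun i => (of (q i)).applL r) i := by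
  simp only [T, applL_sum, applL_comp, applL_Z]

variable {p : ℕ → C(X, X)}

theorem applL_Z_tprod (hcomm : ∀ i j, (p i).comp (p j) = (p j).comp (p i))
    (hmov : ∀ i j, i ≠ j → Disjoint {x | p i x ≠ x} {x | p j x ≠ x}) (r n : ℕ)
    (f : Fin r → C(X, ℂ)) :
    (Z p n).applL r (PiTensorProduct.tprod ℂ f) =
      ∑ t ∈ (Finset.range n).powerset, (-1 : ℂ) ^ t.card •
        PiTensorProduct.tprod ℂ (f + ∑ i ∈ t, fun j => (f j).comp (p (i + 1)) - f j) := by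
  induction n with
  | zero => simp [applL_Z]
  | succ n ih =>
    have hstep : ∀ t : Finset ℕ, n ∉ t →
        (fun j => (f + ∑ i ∈ t, fun j => (f j).comp (p (i + 1)) - f j) j |>.comp (p (n + 1))) =
          f + ∑ i ∈ insert n t, fun j => (f j).comp (p (i + 1)) - f j := by
      intro t hnt
      have hlt : ∀ i ∈ t, i + 1 ≠ n + 1 := fun i hi h => hnt (Nat.add_right_cancel h ▸ hi)
      funext j
      simpa only [Pi.add_apply, Finset.sum_apply] using
        (f j).add_sum_comp_sub_self_comp (fun i => p (i + 1)) hnt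
          (fun i _ => hcomm _ _) (fun i hi => hmov _ _ (hlt i hi))
    rw [applL_Z, complProd_succ, ← applL_Z, Module.End.mul_apply, ih, map_sum,
      Finset.range_add_one, Finset.sum_powerset_insert Finset.notMem_range_self,
      ← Finset.sum_add_distrib]
    refine Finset.sum_congr rfl fun t ht => ?_
    have hnt : n ∉ t := fun hn => by simpa using Finset.mem_powerset.mp ht hn
    rw [map_smul, LinearMap.sub_apply, Module.End.one_apply, applL_of_tprod, hstep t hnt,
      Finset.card_insert_of_notMem hnt, pow_succ, smul_sub, mul_neg_one, neg_smul,
      sub_eq_add_neg]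

theorem applL_Z_eq_zero (hcomm : ∀ i j, (p i).comp (p j) = (p j).comp (p i))
    (hmov : ∀ i j, i ≠ j → Disjoint {x | p i x ≠ x} {x | p j x ≠ x}) {r n : ℕ} (hrn : r < n) :
    (Z p n).applL r = 0 := by
  refine PiTensorProduct.ext <| MultilinearMap.ext fun f => ?_
  rw [LinearMap.compMultilinearMap_apply, applL_Z_tprod hcomm hmov]
  exact MultilinearMap.sum_powerset_neg_one_pow_smul_map_add_sum _ _ _ (by simpa using hrn)

end Ens

theorem lodayL_tprod (B : Type) [CommRing B] [Algebra ℂ B] {r s : ℕ} (σ : Fin r → Fin s)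
    (f : Fin r → B) :
    lodayL B σ (PiTensorProduct.tprod ℂ f) =
      PiTensorProduct.tprod ℂ fun j => ∏ i ∈ Finset.univ.filter (fun i => σ i = j), f i :=
  PiTensorProduct.lift.tprod f

namespace Ens

theorem lodayL_comp_applL (A : Ens X Y) {r s : ℕ} (σ : Fin r → Fin s) :
    lodayL C(X, ℂ) σ ∘ₗ A.applL r = A.applL s ∘ₗ lodayL C(Y, ℂ) σ := by
  refine PiTensorProduct.ext <| MultilinearMap.ext fun f => ?_
  simp only [LinearMap.compMultilinearMap_apply, LinearMap.comp_apply, lodayL_tprod, applL_tprod,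
    map_finsuppSum, map_smul]
  refine Finsupp.sum_congr fun a _ => ?_
  congr 2
  funext j
  exact (map_prod (ContinuousMap.compRightAlgHom ℂ ℂ a) f _).symm

theorem applL_T_of_lt {q : ℕ → C(Y, Y)} (hcomm : ∀ i j, (q i).comp (q j) = (q j).comp (q i))
    (hmov : ∀ i j, i ≠ j → Disjoint {y | q i y ≠ y} {y | q j y ≠ y}) (h : ℕ → C(X, Y))
    {r n : ℕ} (hrn : r < n) : (T q h n).applL r = (T q h (r + 1)).applL r := by
  rw [T, T, applL_sum, applL_sum]
  refine (Finset.sum_subset (Finset.range_subset_range.mpr hrn) fun i _ hi => ?_).symm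
  rw [applL_comp, applL_Z_eq_zero hcomm hmov (by simpa using hi), LinearMap.comp_zero]

end Ens

namespace ProjTwist

def swap (PT : ProjTwist X Y) : ProjTwist Y X where
  p := PT.q
  q := PT.p
  h := PT.hb
  hb := PT.h
  p_idem := PT.q_idem
  p_comm := PT.q_comm
  q_idem := PT.p_idem
  q_comm := PT.p_comm
  p_mov := PT.q_mov
  q_mov := PT.p_mov
  qh := PT.phb
  phb := PT.qh
  hbh i j := PT.hhb j i
  hhb i j := PT.hbh j i

theorem applL_T_comp_applL_T (PT : ProjTwist X Y) (r : ℕ) :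
    (Ens.T PT.q PT.h (r + 1)).applL r ∘ₗ (Ens.T PT.p PT.hb (r + 1)).applL r = LinearMap.id := by
  set P := fun i => (Ens.of (PT.p i)).applL r
  have hcomm : ∀ i j, Commute (P i) (P j) := fun i j => by
    simp only [P, Commute, SemiconjBy, Module.End.mul_eq_comp, ← Ens.applL_of_comp, PT.p_comm]
  have hidem : ∀ i, IsIdempotentElem (P i) := fun i => by
    simp only [P, IsIdempotentElem, Module.End.mul_eq_comp, ← Ens.applL_of_comp, PT.p_idem]
  have hhbp : ∀ i j, (Ens.of (PT.hb i)).applL r ∘ₗ P j =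
      (Ens.of (PT.q j)).applL r ∘ₗ (Ens.of (PT.hb i)).applL r := fun i j => by
    simp only [P, ← Ens.applL_of_comp, PT.phb]
  have hhhb : ∀ i j, (Ens.of (PT.h i)).applL r ∘ₗ (Ens.of (PT.hb j)).applL r = P i * P j :=
    fun i j => by simp only [P, Module.End.mul_eq_comp, ← Ens.applL_of_comp, PT.hbh]
  rw [Ens.applL_T, Ens.applL_T, sum_comp_sum_eq_one_sub_complProd hcomm hidem hhbp hhhb,
    ← Ens.applL_Z, Ens.applL_Z_eq_zero PT.p_comm PT.p_mov (Nat.lt_succ_self r), sub_zero]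
  rfl

end ProjTwist

/-- If `X` and `Y` are connected by projections and twists, then the Loday
functors `𝓛_{C(X)}` and `𝓛_{C(Y)}` are isomorphic: the maps `Φ_r = T̄_{r+1}^{(r)}` and
`Ψ_r = T_{r+1}^{(r)}` are mutually inverse and natural with respect to every surjection
`σ : ⟨r⟩ → ⟨s⟩`. -/
theorem loday_functors_isomorphic {X Y : Type} [TopologicalSpace X] [TopologicalSpace Y]
    (PT : ProjTwist X Y)
    (Φ : ∀ r : ℕ, (⨂[ℂ] _ : Fin r, C(X, ℂ)) →ₗ[ℂ] ⨂[ℂ] _ : Fin r, C(Y, ℂ))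
    (Ψ : ∀ r : ℕ, (⨂[ℂ] _ : Fin r, C(Y, ℂ)) →ₗ[ℂ] ⨂[ℂ] _ : Fin r, C(X, ℂ))
    (hΦ : ∀ r, Φ r = (Ens.T PT.p PT.hb (r + 1)).applL r)
    (hΨ : ∀ r, Ψ r = (Ens.T PT.q PT.h (r + 1)).applL r) :
    (∀ r, (Ψ r).comp (Φ r) = LinearMap.id ∧ (Φ r).comp (Ψ r) = LinearMap.id) ∧
    (∀ (r s : ℕ) (σ : Fin r → Fin s), Function.Surjective σ →
      (lodayL C(Y, ℂ) σ).comp (Φ r) = (Φ s).comp (lodayL C(X, ℂ) σ) ∧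
      (lodayL C(X, ℂ) σ).comp (Ψ r) = (Ψ s).comp (lodayL C(Y, ℂ) σ)) := by
  refine ⟨fun r => ?_, fun r s σ hσ => ?_⟩
  · rw [hΦ, hΨ]
    exact ⟨PT.applL_T_comp_applL_T r, PT.swap.applL_T_comp_applL_T r⟩
  · have hsr : s < r + 1 :=
      Nat.lt_succ_of_le (by simpa using Fintype.card_le_of_surjective σ hσ)
    rw [hΦ, hΦ, hΨ, hΨ, Ens.lodayL_comp_applL, Ens.lodayL_comp_applL,
      Ens.applL_T_of_lt PT.p_comm PT.p_mov PT.hb hsr,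
      Ens.applL_T_of_lt PT.q_comm PT.q_mov PT.h hsr]
    exact ⟨rfl, rfl⟩
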